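/- Weighted Dyck paths with down-step weights λ_{2n+1} = 1 and λ_{2n} = 2 are counted by the little Schröder numbers: for every n ≥ 0, the total weight of Dyck paths of length 2n, where a down step from height h to height h−1 contributes λ_h, with λ_h = 1 if h is odd and λ_h = 2 if h is even (h ≥ 1), equals the little Schröder number s_n. -/

import Mathlib

open Finset

/-- Steps for Schröder paths: `U = (1,1)`, `D = (1,-1)`, `H = (2,0)`. -/
inductive SStep | U | D | H
deriving DecidableEq

/-- The total horizontal length of a Schröder path. -/
def xlen (l : List SStep) : ℕ :=
  (l.map (fun s => match s with | .H => 2 | _ => 1)).sum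

/-- The final height of a Schröder path. -/
def sht (l : List SStep) : ℤ :=
  (l.map (fun s => match s with | .U => 1 | .D => -1 | .H => 0)).sum

/-- A little Schröder path of length `2n`: from `(0,0)` to `(2n,0)` with steps
`(1,1)`, `(1,-1)`, `(2,0)`, never below the x-axis, no `(2,0)` step on the x-axis. -/
def IsLittleSchroederPath (n : ℕ) (l : List SStep) : Prop :=
  xlen l = 2 * n ∧ sht l = 0 ∧ (∀ p, p <+: l → 0 ≤ sht p) ∧
  ∀ p, p ++ [SStep.H] <+: l → 0 < sht p

/-- The `n`-th little Schröder number (A001003), as the number of little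
Schröder paths of length `2n`. -/
noncomputable def littleSchroeder (n : ℕ) : ℕ :=
  Set.ncard {l : List SStep | IsLittleSchroederPath n l}

/-- Steps for Motzkin paths. -/
inductive MStep | up | down | flat
deriving DecidableEq

instance instFintypeMStep : Fintype MStep :=
  ⟨{MStep.up, MStep.down, MStep.flat}, fun x => by cases x <;> simp⟩

/-- The height of a Motzkin path `f` of length `m` after `i` steps. -/
def mht {m : ℕ} (f : Fin m → MStep) (i : ℕ) : ℤ :=
  ∑ j : Fin m, if (j : ℕ) < i then
    (match f j with | .up => 1 | .down => -1 | .flat => 0) else 0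

/-- `f` is a Motzkin path: it stays weakly above the x-axis and ends at height 0. -/
def IsMotzkinPath {m : ℕ} (f : Fin m → MStep) : Prop :=
  (∀ i, 0 ≤ mht f i) ∧ mht f m = 0

/-- The `n`-th Motzkin number, as the number of Motzkin paths of length `n`. -/
noncomputable def motzkin (n : ℕ) : ℕ :=
  Set.ncard {f : Fin n → MStep | IsMotzkinPath f}

/-- The weight of the path `f`, where up steps have weight 1, a horizontal step
at height `h` has weight `b h`, and a down step starting at height `h` has
weight `lam h`. -/
def mweight {m : ℕ} (b lam : ℕ → ℕ) (f : Fin m → MStep) : ℕ :=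
  ∏ j : Fin m, match f j with
    | .up => 1
    | .flat => b (mht f (j : ℕ)).toNat
    | .down => lam (mht f (j : ℕ)).toNat

open Classical in
/-- The total weight of all weighted Motzkin paths of length `m`
(the `m`-th moment for the recurrence coefficients `b`, `lam`). -/
noncomputable def moment (b lam : ℕ → ℕ) (m : ℕ) : ℕ :=
  ∑ f ∈ Finset.univ.filter (fun f : Fin m → MStep => IsMotzkinPath f),
    mweight b lam f

open Classical in
/-- The total weight of all weighted Dyck paths (Motzkin paths with no
horizontal steps) of length `m`, where a down step starting at height `h` has
weight `lam h`. -/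
noncomputable def dyckMoment (lam : ℕ → ℕ) (m : ℕ) : ℕ :=
  ∑ f ∈ Finset.univ.filter
      (fun f : Fin m → MStep => IsMotzkinPath f ∧ ∀ j, f j ≠ MStep.flat),
    mweight (fun _ => 1) lam f


def lamS (h : ℕ) : ℕ := if Odd h then 1 else 2
def Tc : ℕ → ℕ → ℕ
  | 0, 0 => 1
  | _+1, 0 => 0
  | 0, m+1 => Tc 1 m
  | h+1, m+1 => Tc (h+2) m + lamS (h+1) * Tc h m


def Sc : ℕ → ℕ → ℕ
  | 0, 0 => 1
  | _+1, 0 => 0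
  | 0, m+1 => Sc 1 m
  | h+1, 1 => Sc (h+2) 0 + Sc h 0
  | h+1, m+2 => Sc (h+2) (m+1) + Sc h (m+1) + Sc (h+1) m

lemma Sc_pos_zero (h : ℕ) (hh : 0 < h) : Sc h 0 = 0 := by
  match h, hh with
  | h+1, _ => rfl

lemma Sc_succ (j m : ℕ) : Sc (j+1) (m+1) = Sc (j+2) m + Sc j m + Sc (j+1) (m-1) := by
  cases m with
  | zero => simp [Sc]
  | succ m => rfl

lemma pascal_sum (a : ℕ) (f : ℕ → ℕ) :
    ∑ k ∈ range (a+2), (a+1).choose k * f k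
      = (∑ k ∈ range (a+1), a.choose k * f k) + ∑ k ∈ range (a+1), a.choose k * f (k+1) := by
  rw [Finset.sum_range_succ' (fun k => (a+1).choose k * f k)]
  simp only [Nat.choose_succ_succ, add_mul, Nat.choose_zero_right]
  rw [Finset.sum_add_distrib]
  have : ∑ k ∈ range (a+1), a.choose k * f k
      = (∑ k ∈ range a, a.choose (k+1) * f (k+1)) + a.choose 0 * f 0 := by
    rw [← Finset.sum_range_succ' (fun k => a.choose k * f k)]
  rw [this]
  have h2 : ∑ k ∈ range (a+1), a.choose (k+1) * f (k+1)
      = ∑ k ∈ range a, a.choose (k+1) * f (k+1) := by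
    rw [Finset.sum_range_succ, Nat.choose_succ_self, zero_mul, add_zero]
  simp [h2]
  ring

def Ps (a t : ℕ) : ℕ := ∑ k ∈ range (a+1), a.choose k * Sc (2*a - k) (t - k)
def Qs (a t : ℕ) : ℕ := ∑ k ∈ range (a+1), a.choose k * Sc (2*a+1 - k) (t - k)

lemma Ps_succ_eq (a m : ℕ) :
    Ps (a+1) m = (∑ k ∈ range (a+1), a.choose k * Sc (2*a+2 - k) (m - k))
      + ∑ k ∈ range (a+1), a.choose k * Sc (2*a+1 - k) (m - k - 1) := by
  unfold Ps
  have h1 : ∑ k ∈ range (a+1+1), (a+1).choose k * Sc (2*(a+1) - k) (m - k)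
      = ∑ k ∈ range (a+2), (a+1).choose k * (fun k => Sc (2*a+2 - k) (m - k)) k := by
    apply Finset.sum_congr rfl
    intro k _
    have : 2*(a+1) - k = 2*a+2 - k := by omega
    simp only [this]
  rw [h1, pascal_sum]
  congr 1
  apply Finset.sum_congr rfl
  intro k _
  have e1 : 2*a+2 - (k+1) = 2*a+1 - k := by omega
  have e2 : m - (k+1) = m - k - 1 := by omega
  simp only [e1, e2]

lemma O_id (a m : ℕ) : Qs a (m+1) = Ps (a+1) m + Ps a m := by
  have hterm : ∀ k ∈ range (a+1),
      a.choose k * Sc (2*a+1 - k) (m+1 - k)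
        = a.choose k * Sc (2*a+2 - k) (m - k)
          + a.choose k * Sc (2*a - k) (m - k)
          + a.choose k * Sc (2*a+1 - k) (m - k - 1) := by
    intro k hk
    rw [mem_range] at hk
    rcases le_or_gt k m with hkm | hkm
    · have e1 : 2*a+1 - k = (2*a - k) + 1 := by omega
      have e2 : 2*a+2 - k = (2*a - k) + 2 := by omega
      have e3 : m+1 - k = (m - k) + 1 := by omega
      rw [e1, e2, e3, Sc_succ]; ring
    · have z1 : Sc (2*a+1-k) (m+1-k) = 0 := by
        have h0 : m+1-k = 0 := by omega
        rw [h0]; exact Sc_pos_zero _ (by omega)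
      have z2 : Sc (2*a+2-k) (m-k) = 0 := by
        have h0 : m - k = 0 := by omega
        rw [h0]; exact Sc_pos_zero _ (by omega)
      have z3 : Sc (2*a-k) (m-k) = 0 := by
        have h0 : m - k = 0 := by omega
        rw [h0]; exact Sc_pos_zero _ (by omega)
      have z4 : Sc (2*a+1-k) (m-k-1) = 0 := by
        have h0 : m - k - 1 = 0 := by omega
        rw [h0]; exact Sc_pos_zero _ (by omega)
      rw [z1, z2, z3, z4]; ring
  unfold Qs
  rw [Finset.sum_congr rfl hterm, Finset.sum_add_distrib, Finset.sum_add_distrib,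
    Ps_succ_eq]
  unfold Ps
  ring

lemma Qs_zero (a : ℕ) : Qs a 0 = 0 := by
  unfold Qs
  apply Finset.sum_eq_zero
  intro k hk
  rw [mem_range] at hk
  have h0 : (0:ℕ) - k = 0 := by omega
  rw [h0, Sc_pos_zero _ (by omega), mul_zero]

lemma E_id (a m : ℕ) : Ps (a+1) (m+1) = Qs (a+1) m + 2 * Qs a m := by
  cases m with
  | zero =>
    rw [Qs_zero, Qs_zero]
    unfold Ps
    apply Finset.sum_eq_zero
    intro k hk
    rw [mem_range] at hk
    rcases Nat.eq_zero_or_pos k with rfl | hkpos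
    · have hz : Sc (2*(a+1)) 1 = 0 := by
        have e : 2*(a+1) = (2*a+1) + 1 := by omega
        rw [e, Sc_succ]
        have z1 := Sc_pos_zero ((2*a+1)+2) (by omega)
        have z2 := Sc_pos_zero (2*a+1) (by omega)
        have z3 := Sc_pos_zero ((2*a+1)+1) (by omega)
        simp only [Nat.zero_sub, z1, z2, z3]
      simp [hz]
    · have h0 : 1 - k = 0 := by omega
      rw [h0, Sc_pos_zero _ (by omega), mul_zero]
  | succ t =>
    -- P(a+1, t+2) = Q(a+1, t+1) + Q(a,t+1) + P(a,t) + P(a+1,t)  via expansion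
    -- and O_id: P(a,t)+P(a+1,t) = Q(a, t+1)
    have hterm : ∀ k ∈ range (a+2),
        (a+1).choose k * Sc (2*(a+1) - k) (t+2 - k)
          = (a+1).choose k * Sc (2*a+3 - k) (t+1 - k)
            + (a+1).choose k * Sc (2*a+1 - k) (t+1 - k)
            + (a+1).choose k * Sc (2*a+2 - k) (t - k) := by
      intro k hk
      rw [mem_range] at hk
      rcases le_or_gt k (t+1) with hkm | hkm
      · have e1 : 2*(a+1) - k = (2*a+1 - k) + 1 := by omega
        have e2 : 2*a+3 - k = (2*a+1 - k) + 2 := by omega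
        have e3 : t+2 - k = (t+1 - k) + 1 := by omega
        have e4 : t+1-k-1 = t - k := by omega
        have e5 : (2*a+1 - k) + 1 = 2*a+2 - k := by omega
        rw [e1, e2, e3, Sc_succ, e4, e5]; ring
      · have z1 : Sc (2*(a+1)-k) (t+2-k) = 0 := by
          have h0 : t+2-k = 0 := by omega
          rw [h0]; exact Sc_pos_zero _ (by omega)
        have z2 : Sc (2*a+3-k) (t+1-k) = 0 := by
          have h0 : t+1-k = 0 := by omega
          rw [h0]; exact Sc_pos_zero _ (by omega)
        have z3 : Sc (2*a+1-k) (t+1-k) = 0 := by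
          have h0 : t+1-k = 0 := by omega
          rw [h0]; exact Sc_pos_zero _ (by omega)
        have z4 : Sc (2*a+2-k) (t-k) = 0 := by
          have h0 : t - k = 0 := by omega
          rw [h0]; exact Sc_pos_zero _ (by omega)
        rw [z1, z2, z3, z4]; ring
    have expand : Ps (a+1) (t+2)
        = Qs (a+1) (t+1)
          + (∑ k ∈ range (a+2), (a+1).choose k * Sc (2*a+1 - k) (t+1 - k))
          + Ps (a+1) t := by
      unfold Ps Qs
      rw [Finset.sum_congr rfl hterm, Finset.sum_add_distrib, Finset.sum_add_distrib]
      have hA : (∑ k ∈ range (a+1+1), (a+1).choose k * Sc (2*(a+1)+1 - k) (t+1 - k))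
          = ∑ k ∈ range (a+2), (a+1).choose k * Sc (2*a+3 - k) (t+1 - k) := by
        apply Finset.sum_congr rfl; intro k _
        have e : 2*(a+1)+1 - k = 2*a+3 - k := by omega
        rw [e]
      have hC : (∑ k ∈ range (a+1+1), (a+1).choose k * Sc (2*(a+1) - k) (t - k))
          = ∑ k ∈ range (a+2), (a+1).choose k * Sc (2*a+2 - k) (t - k) := by
        apply Finset.sum_congr rfl; intro k _
        have e : 2*(a+1) - k = 2*a+2 - k := by omega
        rw [e]
      rw [hA, hC]
    have middle : (∑ k ∈ range (a+2), (a+1).choose k * Sc (2*a+1 - k) (t+1 - k))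
        = Qs a (t+1) + Ps a t := by
      have h1 : ∑ k ∈ range (a+2), (a+1).choose k * Sc (2*a+1 - k) (t+1 - k)
          = ∑ k ∈ range (a+2), (a+1).choose k * (fun k => Sc (2*a+1 - k) (t+1 - k)) k := rfl
      rw [h1, pascal_sum]
      congr 1
      apply Finset.sum_congr rfl
      intro k _
      have e1 : 2*a+1 - (k+1) = 2*a - k := by omega
      have e2 : t+1 - (k+1) = t - k := by omega
      simp only [e1, e2]
    rw [expand, middle]
    have := O_id a t
    omega


lemma Tc_pos_zero (h : ℕ) (hh : 0 < h) : Tc h 0 = 0 := by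
  match h, hh with
  | h+1, _ => rfl

lemma Tc_succ (h m : ℕ) : Tc (h+1) (m+1) = Tc (h+2) m + lamS (h+1) * Tc h m := rfl

lemma Ps_pos_zero (a : ℕ) (ha : 0 < a) : Ps a 0 = 0 := by
  unfold Ps
  apply Finset.sum_eq_zero
  intro k hk
  rw [mem_range] at hk
  have h0 : (0:ℕ) - k = 0 := by omega
  rw [h0, Sc_pos_zero _ (by omega), mul_zero]

lemma lamS_odd (a : ℕ) : lamS (2*a+1) = 1 := by
  simp [lamS, Nat.odd_iff, Nat.add_mul_mod_self_left]
lemma lamS_even (a : ℕ) : lamS (2*a+2) = 2 := by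
  have h : ¬ Odd (2*a+2) := by
    rw [Nat.odd_iff]
    omega
  simp [lamS, h]

lemma bridge : ∀ m a, Tc (2*a) m = Ps a m ∧ Tc (2*a+1) m = Qs a m := by
  intro m
  induction m with
  | zero =>
    intro a
    constructor
    · rcases Nat.eq_zero_or_pos a with rfl | ha
      · simp [Tc, Ps, Sc]
      · rw [Tc_pos_zero _ (by omega), Ps_pos_zero _ ha]
    · rw [Tc_pos_zero _ (by omega), Qs_zero]
  | succ m ih =>
    intro a
    constructor
    · rcases Nat.eq_zero_or_pos a with rfl | ha
      · have h1 : Tc 0 (m+1) = Tc 1 m := rfl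
        have h2 : Tc 1 m = Qs 0 m := by
          have := (ih 0).2
          simpa using this
        have h3 : Qs 0 m = Sc 1 m := by simp [Qs]
        have h4 : Ps 0 (m+1) = Sc 0 (m+1) := by simp [Ps]
        have h5 : Sc 0 (m+1) = Sc 1 m := rfl
        simp [h1, h2, h3, h4, h5]
      · obtain ⟨b, rfl⟩ : ∃ b, a = b + 1 := ⟨a - 1, by omega⟩
        have e1 : 2*(b+1) = (2*b+1)+1 := by ring
        rw [e1, Tc_succ]
        have e2 : 2*b+1+2 = 2*(b+1)+1 := by ring
        have e3 : 2*b+1+1 = 2*b+2 := by ring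
        rw [e2, e3, (ih (b+1)).2, lamS_even, (ih b).2]
        have := E_id b m
        omega
    · have e1 : 2*a+1 = (2*a)+1 := rfl
      rw [Tc_succ]
      have e2 : 2*a+2 = 2*(a+1) := by ring
      rw [e2, (ih (a+1)).1, (ih a).1, lamS_odd, O_id]
      ring


lemma sht_nil : sht [] = 0 := rfl
lemma xlen_nil : xlen [] = 0 := rfl
lemma sht_cons_U (t : List SStep) : sht (SStep.U :: t) = 1 + sht t := by simp [sht]
lemma sht_cons_D (t : List SStep) : sht (SStep.D :: t) = -1 + sht t := by simp [sht]
lemma sht_cons_H (t : List SStep) : sht (SStep.H :: t) = sht t := by simp [sht]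
lemma xlen_cons_U (t : List SStep) : xlen (SStep.U :: t) = 1 + xlen t := by simp [xlen]
lemma xlen_cons_D (t : List SStep) : xlen (SStep.D :: t) = 1 + xlen t := by simp [xlen]
lemma xlen_cons_H (t : List SStep) : xlen (SStep.H :: t) = 2 + xlen t := by simp [xlen]

def SFrom (h m : ℕ) (l : List SStep) : Prop :=
  xlen l = m ∧ ((h:ℤ) + sht l = 0) ∧ (∀ p, p <+: l → 0 ≤ (h:ℤ) + sht p) ∧
    ∀ p, p ++ [SStep.H] <+: l → 0 < (h:ℤ) + sht p

lemma prefix_cons_elim {p : List SStep} {s : SStep} {t : List SStep} (hp : p <+: s :: t) :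
    p = [] ∨ ∃ q, p = s :: q ∧ q <+: t := by
  cases p with
  | nil => exact Or.inl rfl
  | cons a q =>
    rw [List.cons_prefix_cons] at hp
    exact Or.inr ⟨q, by rw [hp.1], hp.2⟩

lemma SFrom_nil (h m : ℕ) : SFrom h m [] ↔ h = 0 ∧ m = 0 := by
  unfold SFrom
  constructor
  · rintro ⟨h1, h2, -, -⟩
    rw [sht_nil] at h2
    constructor
    · omega
    · rw [← h1, xlen_nil]
  · rintro ⟨rfl, rfl⟩
    refine ⟨rfl, by simp [sht_nil], fun p hp => ?_, fun p hp => ?_⟩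
    · rw [List.prefix_nil] at hp
      simp [hp, sht_nil]
    · exfalso
      have := List.prefix_nil.mp hp
      simp at this

lemma SFrom_cons_U (h m : ℕ) (t : List SStep) :
    SFrom h m (SStep.U :: t) ↔ ∃ m', m = m' + 1 ∧ SFrom (h+1) m' t := by
  constructor
  · rintro ⟨h1, h2, h3, h4⟩
    refine ⟨xlen t, by rw [← h1, xlen_cons_U]; omega, rfl, ?_, ?_, ?_⟩
    · rw [sht_cons_U] at h2
      push_cast
      linarith
    · intro p hp
      have := h3 (SStep.U :: p) (by rw [List.cons_prefix_cons]; exact ⟨rfl, hp⟩)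
      rw [sht_cons_U] at this
      push_cast
      linarith
    · intro p hp
      have := h4 (SStep.U :: p) (by
        rw [List.cons_append, List.cons_prefix_cons]; exact ⟨rfl, hp⟩)
      rw [sht_cons_U] at this
      push_cast
      linarith
  · rintro ⟨m', rfl, h1, h2, h3, h4⟩
    refine ⟨by rw [xlen_cons_U, h1]; omega, ?_, ?_, ?_⟩
    · rw [sht_cons_U]
      push_cast at h2
      linarith
    · intro p hp
      rcases prefix_cons_elim hp with rfl | ⟨q, rfl, hq⟩
      · rw [sht_nil]; positivity
      · have := h3 q hq
        rw [sht_cons_U]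
        push_cast at this
        linarith
    · intro p hp
      rcases prefix_cons_elim hp with hnil | ⟨q, hq, hq'⟩
      · exfalso; simp at hnil
      · cases p with
        | nil => exfalso; simp at hq
        | cons a p' =>
          rw [List.cons_append, List.cons.injEq] at hq
          obtain ⟨rfl, rfl⟩ := hq
          have := h4 p' hq'
          rw [sht_cons_U]
          push_cast at this
          linarith

lemma SFrom_cons_D (h m : ℕ) (t : List SStep) :
    SFrom h m (SStep.D :: t) ↔ ∃ h' m', h = h' + 1 ∧ m = m' + 1 ∧ SFrom h' m' t := by
  constructor
  · rintro ⟨h1, h2, h3, h4⟩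
    have hpos : 0 < h := by
      have := h3 [SStep.D] (by rw [List.cons_prefix_cons]; exact ⟨rfl, List.nil_prefix⟩)
      rw [sht_cons_D, sht_nil] at this
      omega
    refine ⟨h - 1, xlen t, by omega, by rw [← h1, xlen_cons_D]; omega, rfl, ?_, ?_, ?_⟩
    · rw [sht_cons_D] at h2
      push_cast
      omega
    · intro p hp
      have := h3 (SStep.D :: p) (by rw [List.cons_prefix_cons]; exact ⟨rfl, hp⟩)
      rw [sht_cons_D] at this
      push_cast
      omega
    · intro p hp
      have := h4 (SStep.D :: p) (by
        rw [List.cons_append, List.cons_prefix_cons]; exact ⟨rfl, hp⟩)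
      rw [sht_cons_D] at this
      push_cast
      omega
  · rintro ⟨h', m', rfl, rfl, h1, h2, h3, h4⟩
    refine ⟨by rw [xlen_cons_D, h1]; omega, ?_, ?_, ?_⟩
    · rw [sht_cons_D]
      push_cast at h2 ⊢
      linarith
    · intro p hp
      rcases prefix_cons_elim hp with rfl | ⟨q, rfl, hq⟩
      · rw [sht_nil]; positivity
      · have := h3 q hq
        rw [sht_cons_D]
        push_cast at this ⊢
        linarith
    · intro p hp
      rcases prefix_cons_elim hp with hnil | ⟨q, hq, hq'⟩
      · exfalso; simp at hnil
      · cases p with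
        | nil => exfalso; simp at hq
        | cons a p' =>
          rw [List.cons_append, List.cons.injEq] at hq
          obtain ⟨rfl, rfl⟩ := hq
          have := h4 p' hq'
          rw [sht_cons_D]
          push_cast at this ⊢
          linarith

lemma SFrom_cons_H (h m : ℕ) (t : List SStep) :
    SFrom h m (SStep.H :: t) ↔ ∃ h' m', h = h' + 1 ∧ m = m' + 2 ∧ SFrom (h'+1) m' t := by
  constructor
  · rintro ⟨h1, h2, h3, h4⟩
    have hpos : 0 < h := by
      have := h4 [] (by simp)
      rw [sht_nil] at this
      omega
    refine ⟨h - 1, xlen t, by omega, by rw [← h1, xlen_cons_H]; omega, rfl, ?_, ?_, ?_⟩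
    · rw [sht_cons_H] at h2
      push_cast
      omega
    · intro p hp
      have := h3 (SStep.H :: p) (by rw [List.cons_prefix_cons]; exact ⟨rfl, hp⟩)
      rw [sht_cons_H] at this
      push_cast
      omega
    · intro p hp
      have := h4 (SStep.H :: p) (by
        rw [List.cons_append, List.cons_prefix_cons]; exact ⟨rfl, hp⟩)
      rw [sht_cons_H] at this
      push_cast
      omega
  · rintro ⟨h', m', rfl, rfl, h1, h2, h3, h4⟩
    have hh : ((h' + 1 : ℕ) : ℤ) = ((h' : ℤ) + 1) := by push_cast; ring
    refine ⟨by rw [xlen_cons_H, h1]; omega, ?_, ?_, ?_⟩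
    · rw [sht_cons_H]
      push_cast at h2 ⊢
      linarith
    · intro p hp
      rcases prefix_cons_elim hp with rfl | ⟨q, rfl, hq⟩
      · rw [sht_nil]; positivity
      · have := h3 q hq
        rw [sht_cons_H]
        push_cast at this ⊢
        linarith
    · intro p hp
      rcases prefix_cons_elim hp with hnil | ⟨q, hq, hq'⟩
      · -- p ++ [H] = [... ] nil case: p = [] and need 0 < h'+1
        cases p with
        | nil => rw [sht_nil]; positivity
        | cons a p' => exfalso; simp at hnil
      · cases p with
        | nil => rw [sht_nil]; positivity
        | cons a p' =>
          rw [List.cons_append, List.cons.injEq] at hq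
          obtain ⟨rfl, rfl⟩ := hq
          have := h4 p' hq'
          rw [sht_cons_H]
          push_cast at this ⊢
          linarith

def schF : ℕ → ℕ → Finset (List SStep)
  | 0, 0 => {[]}
  | _+1, 0 => ∅
  | 0, m+1 => (schF 1 m).image (SStep.U :: ·)
  | h+1, 1 => ((schF (h+2) 0).image (SStep.U :: ·)) ∪ ((schF h 0).image (SStep.D :: ·))
  | h+1, m+2 => ((schF (h+2) (m+1)).image (SStep.U :: ·))
      ∪ ((schF h (m+1)).image (SStep.D :: ·))
      ∪ ((schF (h+1) m).image (SStep.H :: ·))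

lemma consU_inj : Function.Injective (SStep.U :: · : List SStep → List SStep) :=
  fun _ _ h => by simpa using h
lemma consD_inj : Function.Injective (SStep.D :: · : List SStep → List SStep) :=
  fun _ _ h => by simpa using h
lemma consH_inj : Function.Injective (SStep.H :: · : List SStep → List SStep) :=
  fun _ _ h => by simpa using h

lemma disjUD (s₁ s₂ : Finset (List SStep)) :
    Disjoint (s₁.image (SStep.U :: ·)) (s₂.image (SStep.D :: ·)) := by
  rw [Finset.disjoint_left]
  rintro l hl hl'
  rw [Finset.mem_image] at hl hl'
  obtain ⟨x, -, rfl⟩ := hl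
  obtain ⟨y, -, hy⟩ := hl'
  simp at hy

lemma disjUH (s₁ s₂ : Finset (List SStep)) :
    Disjoint (s₁.image (SStep.U :: ·)) (s₂.image (SStep.H :: ·)) := by
  rw [Finset.disjoint_left]
  rintro l hl hl'
  rw [Finset.mem_image] at hl hl'
  obtain ⟨x, -, rfl⟩ := hl
  obtain ⟨y, -, hy⟩ := hl'
  simp at hy

lemma disjDH (s₁ s₂ : Finset (List SStep)) :
    Disjoint (s₁.image (SStep.D :: ·)) (s₂.image (SStep.H :: ·)) := by
  rw [Finset.disjoint_left]
  rintro l hl hl'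
  rw [Finset.mem_image] at hl hl'
  obtain ⟨x, -, rfl⟩ := hl
  obtain ⟨y, -, hy⟩ := hl'
  simp at hy

lemma schF_card : ∀ (m h : ℕ), (schF h m).card = Sc h m := by
  have main : ∀ m, (∀ h, (schF h m).card = Sc h m)
      ∧ (∀ h, (schF h (m+1)).card = Sc h (m+1)) := by
    intro m
    induction m with
    | zero =>
      have h0 : ∀ h, (schF h 0).card = Sc h 0 := by
        intro h
        match h with
        | 0 => rfl
        | h+1 => rfl
      refine ⟨h0, ?_⟩
      intro h
      match h with
      | 0 =>
        show ((schF 1 0).image _).card = Sc 0 1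
        rw [Finset.card_image_of_injective _ consU_inj, h0]
        rfl
      | h+1 =>
        show ((schF (h+2) 0).image _ ∪ (schF h 0).image _).card = _
        rw [Finset.card_union_of_disjoint (disjUD _ _),
          Finset.card_image_of_injective _ consU_inj,
          Finset.card_image_of_injective _ consD_inj, h0, h0]
        rfl
    | succ m ih =>
      refine ⟨ih.2, ?_⟩
      intro h
      match h with
      | 0 =>
        show ((schF 1 (m+1)).image _).card = Sc 0 (m+2)
        rw [Finset.card_image_of_injective _ consU_inj, ih.2]
        rfl
      | h+1 =>
        show (((schF (h+2) (m+1)).image _ ∪ (schF h (m+1)).image _)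
            ∪ (schF (h+1) m).image _).card = _
        rw [Finset.card_union_of_disjoint (by
          rw [Finset.disjoint_union_left]
          exact ⟨disjUH _ _, disjDH _ _⟩),
          Finset.card_union_of_disjoint (disjUD _ _),
          Finset.card_image_of_injective _ consU_inj,
          Finset.card_image_of_injective _ consD_inj,
          Finset.card_image_of_injective _ consH_inj,
          ih.2, ih.2, ih.1]
        rfl
  intro m
  exact (main m).1

lemma mem_schF : ∀ (l : List SStep) (h m : ℕ), l ∈ schF h m ↔ SFrom h m l := by
  intro l
  induction l with
  | nil =>
    intro h m
    rw [SFrom_nil]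
    match h, m with
    | 0, 0 => simp [schF]
    | h+1, 0 => simp [schF]
    | 0, m+1 => simp [schF]
    | h+1, 1 => simp [schF]
    | h+1, m+2 => simp [schF]
  | cons s t ih =>
    intro h m
    cases s with
    | U =>
      rw [SFrom_cons_U]
      match h, m with
      | 0, 0 => refine iff_of_false (by simp [schF]) ?_; rintro ⟨m', hm, -⟩; omega
      | h+1, 0 => refine iff_of_false (by simp [schF]) ?_; rintro ⟨m', hm, -⟩; omega
      | 0, m+1 => simp [schF, ih]
      | h+1, 1 =>
        simp [schF, ih]
        intro hS
        simpa [schF] using (ih (h+1+1) 0).mpr hS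
      | h+1, m+2 => simp [schF, ih]
    | D =>
      rw [SFrom_cons_D]
      match h, m with
      | 0, 0 => refine iff_of_false (by simp [schF]) ?_; rintro ⟨h', m', -, hm, -⟩; omega
      | h+1, 0 => refine iff_of_false (by simp [schF]) ?_; rintro ⟨h', m', -, hm, -⟩; omega
      | 0, m+1 => simp [schF, ih]
      | h+1, 1 => simp [schF, ih]
      | h+1, m+2 => simp [schF, ih]
    | H =>
      rw [SFrom_cons_H]
      match h, m with
      | 0, 0 => refine iff_of_false (by simp [schF]) ?_; rintro ⟨h', m', -, hm, -⟩; omega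
      | h+1, 0 => refine iff_of_false (by simp [schF]) ?_; rintro ⟨h', m', -, hm, -⟩; omega
      | 0, m+1 => simp [schF, ih]
      | h+1, 1 => simp [schF, ih]
      | h+1, m+2 => simp [schF, ih]


def msval : MStep → ℤ | .up => 1 | .down => -1 | .flat => 0

lemma mht_eq {m : ℕ} (f : Fin m → MStep) (i : ℕ) :
    mht f i = ∑ j : Fin m, if (j : ℕ) < i then msval (f j) else 0 := by
  unfold mht msval
  apply Finset.sum_congr rfl
  intro j _
  cases f j <;> rfl

lemma mht_zero {m : ℕ} (f : Fin m → MStep) : mht f 0 = 0 := by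
  simp [mht]

lemma mht_cons {m : ℕ} (s : MStep) (g : Fin m → MStep) (i : ℕ) :
    mht (Fin.cons s g) (i+1) = msval s + mht g i := by
  rw [mht_eq, mht_eq, Fin.sum_univ_succ]
  simp only [Fin.cons_zero, Fin.cons_succ, Fin.val_zero, Fin.val_succ]
  norm_num [Nat.succ_lt_succ_iff]

def DFrom (h : ℕ) {m : ℕ} (f : Fin m → MStep) : Prop :=
  (∀ i, 0 ≤ (h:ℤ) + mht f i) ∧ ((h:ℤ) + mht f m = 0) ∧ ∀ j, f j ≠ .flat

def dwt (h : ℕ) {m : ℕ} (f : Fin m → MStep) : ℕ :=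
  ∏ j : Fin m, match f j with
    | .up => 1
    | .flat => 1
    | .down => lamS ((h:ℤ) + mht f (j:ℕ)).toNat

lemma dwt_cons_up (h : ℕ) {m : ℕ} (g : Fin m → MStep) :
    dwt h (Fin.cons MStep.up g) = dwt (h+1) g := by
  unfold dwt
  rw [Fin.prod_univ_succ]
  simp only [Fin.cons_zero, Fin.cons_succ]
  rw [one_mul]
  apply Finset.prod_congr rfl
  intro j _
  have hm : ((h:ℤ) + mht (Fin.cons MStep.up g) ((j:ℕ)+1)) = (h:ℤ) + 1 + mht g (j:ℕ) := by
    rw [mht_cons]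
    show (h:ℤ) + (1 + mht g (j:ℕ)) = _
    ring
  cases hj : g j <;> simp [hj, hm]

lemma dwt_cons_down (h : ℕ) {m : ℕ} (g : Fin m → MStep) :
    dwt (h+1) (Fin.cons MStep.down g) = lamS (h+1) * dwt h g := by
  unfold dwt
  rw [Fin.prod_univ_succ]
  simp only [Fin.cons_zero, Fin.cons_succ]
  have h0 : (((h+1:ℕ):ℤ) + mht (Fin.cons MStep.down g) ((0:Fin (m+1)) : ℕ)).toNat = h+1 := by
    simp [mht_zero]
  rw [h0]
  congr 1
  apply Finset.prod_congr rfl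
  intro j _
  have hm : ((h:ℤ) + 1 + mht (Fin.cons MStep.down g) ((j:ℕ)+1)) = (h:ℤ) + mht g (j:ℕ) := by
    rw [mht_cons]
    show (h:ℤ) + 1 + (-1 + mht g (j:ℕ)) = _
    ring
  cases hj : g j <;> simp [hj, hm]

lemma msval_up : msval MStep.up = 1 := rfl
lemma msval_down : msval MStep.down = -1 := rfl

lemma DFrom_nil (h : ℕ) (f : Fin 0 → MStep) : DFrom h f ↔ h = 0 := by
  unfold DFrom
  constructor
  · rintro ⟨-, h2, -⟩
    rw [mht_zero] at h2
    omega
  · rintro rfl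
    refine ⟨fun i => ?_, ?_, fun j => j.elim0⟩
    · have : mht f i = 0 := by simp [mht]
      simp [this]
    · rw [mht_zero]
      simp

lemma DFrom_cons_up (h m : ℕ) (g : Fin m → MStep) :
    DFrom h (Fin.cons MStep.up g) ↔ DFrom (h+1) g := by
  unfold DFrom
  constructor
  · rintro ⟨h1, h2, h3⟩
    refine ⟨fun i => ?_, ?_, fun j => ?_⟩
    · have := h1 (i+1)
      rw [mht_cons, msval_up] at this
      push_cast
      linarith
    · rw [mht_cons, msval_up] at h2
      push_cast
      linarith
    · have := h3 j.succ
      rwa [Fin.cons_succ] at this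
  · rintro ⟨h1, h2, h3⟩
    refine ⟨fun i => ?_, ?_, fun j => ?_⟩
    · cases i with
      | zero => rw [mht_zero]; positivity
      | succ i =>
        rw [mht_cons, msval_up]
        have := h1 i
        push_cast at this
        linarith
    · rw [mht_cons, msval_up]
      push_cast at h2
      linarith
    · refine Fin.cases ?_ (fun j => ?_) j
      · rw [Fin.cons_zero]; simp
      · rw [Fin.cons_succ]; exact h3 j

lemma DFrom_cons_down (h m : ℕ) (g : Fin m → MStep) :
    DFrom (h+1) (Fin.cons MStep.down g) ↔ DFrom h g := by
  unfold DFrom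
  constructor
  · rintro ⟨h1, h2, h3⟩
    refine ⟨fun i => ?_, ?_, fun j => ?_⟩
    · have := h1 (i+1)
      rw [mht_cons, msval_down] at this
      push_cast at this ⊢
      linarith
    · rw [mht_cons, msval_down] at h2
      push_cast at h2 ⊢
      linarith
    · have := h3 j.succ
      rwa [Fin.cons_succ] at this
  · rintro ⟨h1, h2, h3⟩
    refine ⟨fun i => ?_, ?_, fun j => ?_⟩
    · cases i with
      | zero => rw [mht_zero]; positivity
      | succ i =>
        rw [mht_cons, msval_down]
        have := h1 i
        push_cast at this ⊢
        linarith
    · rw [mht_cons, msval_down]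
      push_cast at h2 ⊢
      linarith
    · refine Fin.cases ?_ (fun j => ?_) j
      · rw [Fin.cons_zero]; simp
      · rw [Fin.cons_succ]; exact h3 j

lemma DFrom_cons_down_zero (m : ℕ) (g : Fin m → MStep) :
    ¬ DFrom 0 (Fin.cons MStep.down g) := by
  rintro ⟨h1, -, -⟩
  have := h1 1
  rw [mht_cons, msval_down, mht_zero] at this
  norm_num at this

lemma DFrom_cons_flat (h m : ℕ) (g : Fin m → MStep) :
    ¬ DFrom h (Fin.cons MStep.flat g) := by
  rintro ⟨-, -, h3⟩
  have := h3 0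
  rw [Fin.cons_zero] at this
  exact this rfl

open Classical in
lemma dyck_count : ∀ (m h : ℕ),
    (∑ f ∈ Finset.univ.filter (fun f : Fin m → MStep => DFrom h f), dwt h f) = Tc h m := by
  intro m
  induction m with
  | zero =>
    intro h
    rcases Nat.eq_zero_or_pos h with rfl | hpos
    · rw [Finset.filter_true_of_mem (fun f _ => (DFrom_nil 0 f).mpr rfl)]
      rw [Fintype.sum_unique]
      simp [dwt, Tc]
    · rw [Finset.filter_false_of_mem (fun f _ => by
        rw [DFrom_nil]; omega), Finset.sum_empty, Tc_pos_zero _ hpos]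
  | succ m ih =>
    intro h
    rw [Finset.sum_filter]
    rw [← Equiv.sum_comp (Fin.consEquiv (fun _ => MStep))
      (fun f => if DFrom h f then dwt h f else 0)]
    rw [Fintype.sum_prod_type]
    have huniv : (Finset.univ : Finset MStep) = {MStep.up, MStep.down, MStep.flat} := by decide
    rw [huniv, Finset.sum_insert (by decide), Finset.sum_insert (by decide),
      Finset.sum_singleton]
    have happ : ∀ (s : MStep) (g : Fin m → MStep),
        (Fin.consEquiv (fun _ => MStep)) (s, g) = Fin.cons s g := fun _ _ => rfl
    have hup : (∑ g : Fin m → MStep,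
        if DFrom h ((Fin.consEquiv (fun _ => MStep)) (MStep.up, g))
        then dwt h ((Fin.consEquiv (fun _ => MStep)) (MStep.up, g)) else 0) = Tc (h+1) m := by
      rw [← ih (h+1), Finset.sum_filter]
      apply Finset.sum_congr rfl
      intro g _
      rw [happ]
      by_cases hd : DFrom (h+1) g
      · rw [if_pos ((DFrom_cons_up h m g).mpr hd), if_pos hd, dwt_cons_up]
      · rw [if_neg (fun c => hd ((DFrom_cons_up h m g).mp c)), if_neg hd]
    have hflat : (∑ g : Fin m → MStep,
        if DFrom h ((Fin.consEquiv (fun _ => MStep)) (MStep.flat, g))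
        then dwt h ((Fin.consEquiv (fun _ => MStep)) (MStep.flat, g)) else 0) = 0 := by
      apply Finset.sum_eq_zero
      intro g _
      rw [happ, if_neg (DFrom_cons_flat h m g)]
    rw [hup, hflat, add_zero]
    rcases Nat.eq_zero_or_pos h with rfl | hpos
    · have hdown : (∑ g : Fin m → MStep,
          if DFrom 0 ((Fin.consEquiv (fun _ => MStep)) (MStep.down, g))
          then dwt 0 ((Fin.consEquiv (fun _ => MStep)) (MStep.down, g)) else 0) = 0 := by
        apply Finset.sum_eq_zero
        intro g _
        rw [happ, if_neg (DFrom_cons_down_zero m g)]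
      rw [hdown, add_zero]
      rfl
    · obtain ⟨h', rfl⟩ : ∃ h', h = h' + 1 := ⟨h - 1, by omega⟩
      have hdown : (∑ g : Fin m → MStep,
          if DFrom (h'+1) ((Fin.consEquiv (fun _ => MStep)) (MStep.down, g))
          then dwt (h'+1) ((Fin.consEquiv (fun _ => MStep)) (MStep.down, g)) else 0)
          = lamS (h'+1) * Tc h' m := by
        rw [← ih h', Finset.sum_filter, Finset.mul_sum]
        apply Finset.sum_congr rfl
        intro g _
        rw [happ]
        by_cases hd : DFrom h' g
        · rw [if_pos ((DFrom_cons_down h' m g).mpr hd), if_pos hd, dwt_cons_down]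
        · rw [if_neg (fun c => hd ((DFrom_cons_down h' m g).mp c)), if_neg hd, mul_zero]
      rw [hdown]
      rfl


open Classical in
lemma dyckMoment_eq_Tc (m : ℕ) :
    dyckMoment (fun h => if Odd h then 1 else 2) m = Tc 0 m := by
  rw [← dyck_count m 0]
  unfold dyckMoment
  have hfil : (Finset.univ.filter
      (fun f : Fin m → MStep => IsMotzkinPath f ∧ ∀ j, f j ≠ MStep.flat))
      = Finset.univ.filter (fun f => DFrom 0 f) := by
    apply Finset.filter_congr
    intro f _
    unfold DFrom IsMotzkinPath
    simp only [Nat.cast_zero, zero_add]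
    tauto
  rw [hfil]
  apply Finset.sum_congr rfl
  intro f _
  unfold mweight dwt
  apply Finset.prod_congr rfl
  intro j _
  cases hj : f j <;> simp [hj, lamS]

lemma littleSchroeder_eq (n : ℕ) : littleSchroeder n = Sc 0 (2*n) := by
  unfold littleSchroeder
  have hset : {l : List SStep | IsLittleSchroederPath n l} = ↑(schF 0 (2*n)) := by
    ext l
    rw [Set.mem_setOf_eq, Finset.mem_coe, mem_schF]
    unfold IsLittleSchroederPath SFrom
    simp only [Nat.cast_zero, zero_add]
  rw [hset, Set.ncard_coe_finset, schF_card]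

/-- Weighted Dyck paths of length `2n`, where a down step starting at height `h`
has weight `1` if `h` is odd and `2` if `h` is even, have total weight the
`n`-th little Schröder number. -/
theorem weighted_dyck_eq_littleSchroeder (n : ℕ) :
    dyckMoment (fun h => if Odd h then 1 else 2) (2 * n) = littleSchroeder n := by
  rw [dyckMoment_eq_Tc, littleSchroeder_eq]
  have hb := (bridge (2*n) 0).1
  have hp : Ps 0 (2*n) = Sc 0 (2*n) := by simp [Ps]
  simpa [hp] using hb
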